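/- arXiv:1112.1131 — 7 statements merged into one kernel-verified Lean document; each statement's English description precedes it below -/
import Mathlib

section
/- Let x_r < ... < x_{r+p+1} be distinct points, V : ℝ → ℝ, F_0 the interpolant of V at x_r,...,x_{r+p}, F_1 the interpolant at x_{r+1},...,x_{r+p+1}, and f_i = F_i'. Then for any point x* ∈ {x_{r+1}, ..., x_{r+p}} (a point common to both stencils), f_1(x*) − f_0(x*) = V[x_r,...,x_{r+p+1}] · (x_{r+p+1} − x_r) · Π_{m : x_{r+m} ≠ x*, 1 ≤ m ≤ p} (x* − x_{r+m}). -/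
/-!
`F₁ - F₀` has degree at most `p` and vanishes at the `p` shared nodes `x_{r+1}, …, x_{r+p}`, so it
is `c · ∏_{m=1}^{p} (X - x_{r+m})`, where `c` is the difference of the degree-`p` coefficients.
The degree-`p` coefficient of the interpolant on `x_r, …, x_{r+p}` is `V[x_r, …, x_{r+p}]`
(induction on `p` through the Neville–Aitken identity), so
`c = V[x_{r+1}, …, x_{r+p+1}] - V[x_r, …, x_{r+p}] = V[x_r, …, x_{r+p+1}] (x_{r+p+1} - x_r)`.
Differentiating the product at the node `x_{r+k}` leaves only the term without `X - x_{r+k}`.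
-/

/-- Divided differences of the data `V` at the points `x`:
`dd x V j i = V[x_i, ..., x_{i+j}]`. -/
noncomputable def dd (x V : ℤ → ℝ) : ℕ → ℤ → ℝ
  | 0, i => V i
  | j + 1, i => (dd x V j (i + 1) - dd x V j i) / (x (i + (j : ℤ) + 1) - x i)

open Polynomial Finset Lagrange

theorem Polynomial.eq_C_coeff_mul_nodal_of_eval_eq_zero {R ι : Type*} [CommRing R] [IsDomain R]
    {s : Finset ι} {v : ι → R} (hvs : Set.InjOn v s) {f : R[X]} (hdeg : f.degree ≤ #s)
    (hf : ∀ i ∈ s, f.eval (v i) = 0) : f = C (f.coeff #s) * nodal s v := by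
  refine eq_of_degree_sub_lt_of_eval_index_eq s hvs ?_ fun i hi => by
    rw [hf i hi, eval_mul, eval_nodal_at_node hi, mul_zero]
  rw [degree_lt_iff_coeff_zero]
  intro m hm
  rcases hm.eq_or_lt with rfl | hlt
  · rw [coeff_sub, coeff_C_mul, ← natDegree_nodal (v := v), nodal_monic.coeff_natDegree,
      natDegree_nodal, mul_one, sub_self]
  · have hnodal : (nodal s v).degree < m := by rw [degree_nodal]; exact_mod_cast hlt
    rw [coeff_sub, coeff_C_mul, coeff_eq_zero_of_degree_lt (hdeg.trans_lt (by exact_mod_cast hlt)),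
      coeff_eq_zero_of_degree_lt hnodal, mul_zero, sub_zero]

theorem neville_aitken {R : Type*} [CommRing R] [IsDomain R] {x v : ℤ → R}
    (hx : Function.Injective x) {p : ℕ} {r : ℤ} {A B F : R[X]}
    (hA : A.degree ≤ p) (hB : B.degree ≤ p) (hF : F.degree ≤ ↑(p + 1))
    (hAv : ∀ i ∈ Icc r (r + p), A.eval (x i) = v i)
    (hBv : ∀ i ∈ Icc (r + 1) (r + 1 + p), B.eval (x i) = v i)
    (hFv : ∀ i ∈ Icc r (r + p + 1), F.eval (x i) = v i) :
    C (x (r + p + 1) - x r) * F = (X - C (x r)) * B - (X - C (x (r + p + 1))) * A := by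
  have hlt : ∀ f : R[X], f.degree ≤ ↑(p + 1) → f.degree < #(Icc r (r + p + 1)) := fun f hf =>
    hf.trans_lt (by simp only [Int.card_Icc]; exact_mod_cast (by omega))
  have hlin (a : R) (Q : R[X]) (hQ : Q.degree ≤ p) : ((X - C a) * Q).degree ≤ ↑(p + 1) :=
    (degree_mul_le_of_le (degree_X_sub_C_le a) hQ).trans (by rw [add_comm]; norm_cast)
  refine eq_of_degrees_lt_of_eval_index_eq (Icc r (r + p + 1)) hx.injOn ?_ ?_ ?_
  · exact hlt _ ((degree_mul_le_of_le degree_C_le hF).trans (zero_add _).le)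
  · exact hlt _ ((degree_sub_le _ _).trans (max_le (hlin _ _ hB) (hlin _ _ hA)))
  · intro i hi
    rw [mem_Icc] at hi
    -- `B` is not known at `x r`, nor `A` at `x (r + p + 1)`, but there their factor vanishes
    have hBi : (x i - x r) * B.eval (x i) = (x i - x r) * v i := by
      rcases eq_or_ne i r with rfl | hir
      · rw [sub_self, zero_mul, zero_mul]
      · rw [hBv i (mem_Icc.mpr (by omega))]
    have hAi : (x i - x (r + p + 1)) * A.eval (x i) = (x i - x (r + p + 1)) * v i := by
      rcases eq_or_ne i (r + p + 1) with rfl | hip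
      · rw [sub_self, zero_mul, zero_mul]
      · rw [hAv i (mem_Icc.mpr (by omega))]
    simp only [eval_mul, eval_sub, eval_C, eval_X, hFv i (mem_Icc.mpr hi), hAi, hBi]
    ring

theorem exists_interpolant_Icc {K : Type*} [Field K] {x : ℤ → K} (hx : Function.Injective x)
    (v : ℤ → K) (p : ℕ) (r : ℤ) :
    ∃ A : K[X], A.degree ≤ p ∧ ∀ i ∈ Icc r (r + p), A.eval (x i) = v i := by
  classical
  have hcard : #(Icc r (r + p)) - 1 = p := by simp only [Int.card_Icc]; omega
  refine ⟨interpolate (Icc r (r + p)) x v, ?_, fun i hi => eval_interpolate_at_node v hx.injOn hi⟩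
  simpa only [hcard] using degree_interpolate_le (s := Icc r (r + p)) v hx.injOn

theorem dd_succ_mul_sub {x : ℤ → ℝ} (v : ℤ → ℝ) {p : ℕ} {r : ℤ} (hne : x (r + p + 1) ≠ x r) :
    dd x v (p + 1) r * (x (r + p + 1) - x r) = dd x v p (r + 1) - dd x v p r :=
  div_mul_cancel₀ _ (sub_ne_zero.mpr hne)

theorem coeff_eq_dd_of_eval_eq {x : ℤ → ℝ} (hx : Function.Injective x) (v : ℤ → ℝ) {p : ℕ}
    {r : ℤ} {F : ℝ[X]} (hF : F.degree ≤ p) (hFv : ∀ i ∈ Icc r (r + p), F.eval (x i) = v i) :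
    F.coeff p = dd x v p r := by
  induction p generalizing r F with
  | zero =>
    rw [dd, ← hFv r (by simp), eq_C_of_degree_le_zero (p := F) (by exact_mod_cast hF), eval_C,
      coeff_C_zero]
  | succ p ih =>
    obtain ⟨A, hA, hAv⟩ := exists_interpolant_Icc hx v p r
    obtain ⟨B, hB, hBv⟩ := exists_interpolant_Icc hx v p (r + 1)
    have hFv' : ∀ i ∈ Icc r (r + p + 1), F.eval (x i) = v i := by
      simpa only [Nat.cast_succ, add_assoc] using hFv
    have hcoeff := congrArg (coeff · (p + 1)) (neville_aitken hx hA hB hF hAv hBv hFv')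
    simp only [coeff_C_mul, coeff_sub, coeff_X_sub_C_mul,
      coeff_eq_zero_of_degree_lt (hA.trans_lt (by exact_mod_cast p.lt_succ_self)),
      coeff_eq_zero_of_degree_lt (hB.trans_lt (by exact_mod_cast p.lt_succ_self)),
      mul_zero, sub_zero, ih hA hAv, ih hB hBv] at hcoeff
    have hne : x (r + p + 1) ≠ x r := hx.ne (by omega)
    rw [← dd_succ_mul_sub v hne, mul_comm] at hcoeff
    exact mul_right_cancel₀ (sub_ne_zero.mpr hne) hcoeff

/-- the difference of the derivatives of the interpolants on two
one-shifted stencils, evaluated at a common stencil point `x* = x_{r+k}`. -/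
theorem deriv_shift_difference (p : ℕ) (r : ℤ) (x : ℤ → ℝ) (hx : StrictMono x)
    (V : ℝ → ℝ) (F₀ F₁ : Polynomial ℝ)
    (hd0 : F₀.degree ≤ p) (hd1 : F₁.degree ≤ p)
    (h0 : ∀ i ∈ Finset.Icc r (r + p), F₀.eval (x i) = V (x i))
    (h1 : ∀ i ∈ Finset.Icc (r + 1) (r + p + 1), F₁.eval (x i) = V (x i))
    (k : ℕ) (hk1 : 1 ≤ k) (hkp : k ≤ p) :
    (Polynomial.derivative F₁).eval (x (r + k)) -
      (Polynomial.derivative F₀).eval (x (r + k)) =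
      dd x (fun i => V (x i)) (p + 1) r * (x (r + p + 1) - x r) *
        ∏ m ∈ (Finset.Icc 1 p).erase k, (x (r + k) - x (r + m)) := by
  classical
  set v : ℤ → ℝ := fun i => V (x i)
  have hc : (F₁ - F₀).coeff p = dd x v (p + 1) r * (x (r + p + 1) - x r) := by
    rw [coeff_sub, dd_succ_mul_sub v (hx.injective.ne (by omega)),
      coeff_eq_dd_of_eval_eq hx.injective v hd0 h0,
      coeff_eq_dd_of_eval_eq hx.injective v hd1 (by rwa [add_right_comm])]
  have hcard : #(Icc 1 p) = p := by simp
  have hD : F₁ - F₀ =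
      C (dd x v (p + 1) r * (x (r + p + 1) - x r)) * nodal (Icc 1 p) (fun m : ℕ => x (r + m)) := by
    have hvanish : ∀ m ∈ Icc 1 p, (F₁ - F₀).eval (x (r + m)) = 0 := fun m hm => by
      rw [mem_Icc] at hm
      rw [eval_sub, h1 _ (mem_Icc.mpr (by omega)), h0 _ (mem_Icc.mpr (by omega)), sub_self]
    have hinj : Set.InjOn (fun m : ℕ => x (r + m)) (Icc 1 p) := fun a _ b _ hab => by
      simpa using hx.injective hab
    have := eq_C_coeff_mul_nodal_of_eval_eq_zero hinj
      (by rw [hcard]; exact (degree_sub_le _ _).trans (max_le hd1 hd0)) hvanish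
    rwa [hcard, hc] at this
  rw [← eval_sub, ← derivative_sub, hD, derivative_C_mul, eval_mul, eval_C,
    eval_nodal_derivative_eval_node_eq (v := fun m : ℕ => x (r + m)) (mem_Icc.mpr ⟨hk1, hkp⟩),
    eval_nodal]
end

section
/- Consider the ENO stencil-selection recursion on strictly increasing points (x_j): starting from offset r_1 = 0 at base point x_i, define r_{j+1} = r_j − 1 if |V[x_{i+r_j−1},...,x_{i+r_j+j}]| < |V[x_{i+r_j},...,x_{i+r_j+j+1}]|, and r_{j+1} = r_j otherwise. Similarly define s_1 = 0 at base point x_{i+1}, and s_{j+1} = s_j − 1 or s_j by the analogous rule. Then for all j ≥ 1, r_j ≤ s_j + 1, i.e. i + r_j ≤ (i+1) + s_j, so the left endpoint of the ENO stencil at cell i+1 never lies strictly left of the left endpoint of the stencil at cell i. -/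
/-- ENO reconstruction stencil offsets for cell `i` (interfaces `x_i`, `x_{i+1}`):
`enoOffsetR x V i j` is the left offset `r_j` of the `j+1`-point stencil
`{x_{i+r_j}, ..., x_{i+r_j+j}}` chosen by the ENO selection procedure applied to
the data `V` (the primitive) at the points `x`. -/
noncomputable def enoOffsetR (x V : ℤ → ℝ) (i : ℤ) : ℕ → ℤ
  | 0 => 0
  | 1 => 0
  | j + 2 =>
    let r := enoOffsetR x V i (j + 1)
    if |dd x V (j + 2) (i + r - 1)| < |dd x V (j + 2) (i + r)| then r - 1 else r

lemma eno_aux (x V : ℤ → ℝ) (i : ℤ) (j : ℕ) :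
    enoOffsetR x V i j ≤ enoOffsetR x V (i + 1) j + 1 := by
  induction j using Nat.twoStepInduction with
  | zero => simp [enoOffsetR]
  | one => simp [enoOffsetR]
  | more n _ ih =>
    simp only [enoOffsetR]
    set r := enoOffsetR x V i (n + 1) with hr
    set s := enoOffsetR x V (i + 1) (n + 1) with hs
    rcases lt_or_eq_of_le ih with h | h
    · split_ifs <;> omega
    · have e1 : i + r - 1 = i + 1 + s - 1 := by omega
      have e2 : i + r = i + 1 + s := by omega
      rw [e1, e2]
      split_ifs <;> omega

/-- the ENO stencil for cell `i+1` never lies strictly to the left of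
the ENO stencil for cell `i`: `i + r_j ≤ (i+1) + s_j` for every stage `j ≥ 1`. -/
theorem eno_stencils_ordered (x V : ℤ → ℝ) (hx : StrictMono x) (i : ℤ) (j : ℕ)
    (hj : 1 ≤ j) :
    i + enoOffsetR x V i j ≤ (i + 1) + enoOffsetR x V (i + 1) j := by
  have := eno_aux x V i j
  omega
end

section
/- ENO left-extension sign step: suppose x_{r-1} < x_r < ... < x_{r+p+1} are strictly increasing, |V[x_{r−1},...,x_{r+p}]| < |V[x_r,...,x_{r+p+1}]|, and (−1)^{r+p} V[x_r,...,x_{r+p+1}] = |V[x_r,...,x_{r+p+1}]| > 0. Then (−1)^{(r−1)+(p+1)} V[x_{r−1},...,x_{r+p+1}] > 0. -/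
theorem pos_mul_sub_of_abs_lt {α : Type*} [Ring α] [LinearOrder α] [IsStrictOrderedRing α]
    {s a b : α} (hs : |s| = 1) (hsign : s * a = |a|) (hlt : |b| < |a|) : 0 < s * (a - b) := by
  have hsb : s * b ≤ |b| := by
    calc s * b ≤ |s * b| := le_abs_self _
      _ = |b| := by rw [abs_mul, hs, one_mul]
  rw [mul_sub, hsign]
  exact sub_pos.mpr (hsb.trans_lt hlt)

theorem dd_succ_sub_one (x V : ℤ → ℝ) (j : ℕ) (i : ℤ) :
    dd x V (j + 1) (i - 1) = (dd x V j i - dd x V j (i - 1)) / (x (i + j) - x (i - 1)) := by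
  rw [dd, sub_add_cancel, sub_add_eq_add_sub, sub_add_cancel]

theorem eno_left_extension_sign_general (x V : ℤ → ℝ) (hx : StrictMono x) (r : ℤ) (p : ℕ)
    (hlt : |dd x V (p + 1) (r - 1)| < |dd x V (p + 1) r|)
    (hsign : (-1 : ℝ) ^ (r + (p : ℤ)) * dd x V (p + 1) r = |dd x V (p + 1) r|) :
    0 < (-1 : ℝ) ^ ((r - 1) + ((p : ℤ) + 1)) * dd x V (p + 2) (r - 1) := by
  have hden : 0 < x (r + (p + 1 : ℕ)) - x (r - 1) := sub_pos.mpr (hx (by omega))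
  rw [show (r - 1) + ((p : ℤ) + 1) = r + p by ring, dd_succ_sub_one, ← mul_div_assoc]
  exact div_pos (pos_mul_sub_of_abs_lt (abs_neg_one_zpow _) hsign hlt) hden

/-- ENO left-extension sign step. -/
theorem eno_left_extension_sign (x V : ℤ → ℝ) (hx : StrictMono x) (r : ℤ) (p : ℕ)
    (hlt : |dd x V (p + 1) (r - 1)| < |dd x V (p + 1) r|)
    (hsign : (-1 : ℝ) ^ (r + (p : ℤ)) * dd x V (p + 1) r = |dd x V (p + 1) r|)
    (hpos : 0 < |dd x V (p + 1) r|) :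
    0 < (-1 : ℝ) ^ ((r - 1) + ((p : ℤ) + 1)) * dd x V (p + 2) (r - 1) :=
  eno_left_extension_sign_general x V hx r p hlt hsign
end

section
/- ENO right-extension sign step: suppose x_s < ... < x_{s+p+2} are strictly increasing, |V[x_{s+1},...,x_{s+p+2}]| ≤ |V[x_s,...,x_{s+p+1}]|, and (−1)^{s+p} V[x_s,...,x_{s+p+1}] = |V[x_s,...,x_{s+p+1}]| ≥ 0. Then (−1)^{s+p+1} V[x_s,...,x_{s+p+2}] ≥ 0. -/
lemma mul_sub_nonneg_of_abs_le {α : Type*} [Ring α] [LinearOrder α] [IsStrictOrderedRing α]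
    {ε a b : α} (hε : |ε| ≤ 1) (hb : ε * b = |b|) (hab : |a| ≤ |b|) :
    0 ≤ ε * (b - a) := by
  have hεa : ε * a ≤ |a| :=
    calc ε * a ≤ |ε * a| := le_abs_self _
      _ = |ε| * |a| := abs_mul ε a
      _ ≤ |a| := mul_le_of_le_one_left (abs_nonneg a) hε
  rw [mul_sub, sub_nonneg, hb]
  exact hεa.trans hab

lemma dd_denom_pos {x : ℤ → ℝ} (hx : StrictMono x) (i : ℤ) (j : ℕ) :
    0 < x (i + (j : ℤ) + 1) - x i :=
  sub_pos.mpr (hx (by omega))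

theorem eno_right_extension_sign_general (x V : ℤ → ℝ) (hx : StrictMono x) (s : ℤ) (p : ℕ)
    (hle : |dd x V (p + 1) (s + 1)| ≤ |dd x V (p + 1) s|)
    (hsign : (-1 : ℝ) ^ (s + (p : ℤ)) * dd x V (p + 1) s = |dd x V (p + 1) s|) :
    0 ≤ (-1 : ℝ) ^ (s + (p : ℤ) + 1) * dd x V (p + 2) s := by
  set ε : ℝ := (-1) ^ (s + (p : ℤ))
  have hflip : (-1 : ℝ) ^ (s + (p : ℤ) + 1)
      * (dd x V (p + 1) (s + 1) - dd x V (p + 1) s)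
      = ε * (dd x V (p + 1) s - dd x V (p + 1) (s + 1)) := by
    rw [zpow_add_one₀ (by norm_num : (-1 : ℝ) ≠ 0)]
    ring
  rw [dd, ← mul_div_assoc, hflip]
  exact div_nonneg
    (mul_sub_nonneg_of_abs_le (abs_neg_one_zpow _).le hsign hle)
    (dd_denom_pos hx s (p + 1)).le

/-- ENO right-extension sign step. -/
theorem eno_right_extension_sign (x V : ℤ → ℝ) (hx : StrictMono x) (s : ℤ) (p : ℕ)
    (hle : |dd x V (p + 1) (s + 1)| ≤ |dd x V (p + 1) s|)
    (hsign : (-1 : ℝ) ^ (s + (p : ℤ)) * dd x V (p + 1) s = |dd x V (p + 1) s|)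
    (hnonneg : 0 ≤ |dd x V (p + 1) s|) :
    0 ≤ (-1 : ℝ) ^ (s + (p : ℤ) + 1) * dd x V (p + 2) s :=
  eno_right_extension_sign_general x V hx s p hle hsign
end

section
/- Sign property of p-th order ENO reconstruction: Given cell averages (v̄_i) over a strictly increasing partition (x_{i+1/2}) of ℝ, let v⁻_{i+1/2} and v⁺_{i+1/2} be the left and right reconstructed point values at interface x_{i+1/2} obtained from the p-th order ENO reconstruction algorithm (differentiating the ENO interpolant of the primitive). Then for every interface: if v̄_{i+1} − v̄_i ≥ 0 then v⁺_{i+1/2} − v⁻_{i+1/2} ≥ 0, and if v̄_{i+1} − v̄_i ≤ 0 then v⁺_{i+1/2} − v⁻_{i+1/2} ≤ 0. In particular, v̄_{i+1} = v̄_i implies v⁺_{i+1/2} = v⁻_{i+1/2}. -/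
open Polynomial Finset

noncomputable def stencilInterpolant (x V : ℤ → ℝ) (m : ℤ) (j : ℕ) : ℝ[X] :=
  Lagrange.interpolate (Icc m (m + j)) x V

section Interpolation

variable {x : ℤ → ℝ} (V : ℤ → ℝ)

lemma card_Icc_add (m : ℤ) (j : ℕ) : #(Icc m (m + j)) = j + 1 := by
  simp [Int.card_Icc]; omega

lemma degree_stencilInterpolant_lt (hx : x.Injective) (m : ℤ) (j : ℕ) :
    (stencilInterpolant x V m j).degree < ↑(j + 1) := by
  have := Lagrange.degree_interpolate_lt (r := V) (s := Icc m (m + j)) hx.injOn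
  rwa [card_Icc_add] at this

lemma coeff_stencilInterpolant_eq_zero (hx : x.Injective) (m : ℤ) {j n : ℕ} (hn : j < n) :
    (stencilInterpolant x V m j).coeff n = 0 :=
  coeff_eq_zero_of_degree_lt <| (degree_stencilInterpolant_lt V hx m j).trans_le <| by
    exact_mod_cast hn

lemma coeff_mul_basisDivisor_succ {P : ℝ[X]} {n : ℕ} (hP : P.coeff (n + 1) = 0) (a b : ℝ) :
    (P * Lagrange.basisDivisor a b).coeff (n + 1) = (a - b)⁻¹ * P.coeff n := by
  rw [Lagrange.basisDivisor, mul_left_comm, coeff_C_mul, coeff_mul_X_sub_C, hP]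
  ring

lemma coeff_stencilInterpolant (hx : x.Injective) (j : ℕ) (m : ℤ) :
    (stencilInterpolant x V m j).coeff j = dd x V j m := by
  induction j generalizing m with
  | zero => simp [stencilInterpolant, dd]
  | succ j ih =>
    have hne : x (m + j + 1) - x m ≠ 0 := sub_ne_zero.2 (hx.ne (by omega))
    have hleft : (Icc m (m + ↑(j + 1))).erase (m + j + 1) = Icc m (m + j) := by
      ext k; simp only [mem_erase, mem_Icc]; push_cast; omega
    have hright : (Icc m (m + ↑(j + 1))).erase m = Icc (m + 1) (m + 1 + j) := by
      ext k; simp only [mem_erase, mem_Icc]; push_cast; omega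
    have hsplit : stencilInterpolant x V m (j + 1) =
        stencilInterpolant x V m j * Lagrange.basisDivisor (x m) (x (m + j + 1)) +
          stencilInterpolant x V (m + 1) j * Lagrange.basisDivisor (x (m + j + 1)) (x m) := by
      rw [stencilInterpolant, Lagrange.interpolate_eq_add_interpolate_erase (r := V) hx.injOn
        (i := m) (j := m + j + 1) (by simp only [mem_Icc]; omega) (by simp only [mem_Icc]; omega)
        (by omega), hleft, hright]
      rfl
    rw [hsplit, coeff_add,
      coeff_mul_basisDivisor_succ (coeff_stencilInterpolant_eq_zero V hx _ j.lt_succ_self),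
      coeff_mul_basisDivisor_succ (coeff_stencilInterpolant_eq_zero V hx _ j.lt_succ_self),
      ih, ih, ← neg_sub (x (m + j + 1)), inv_neg]
    change _ = (dd x V j (m + 1) - dd x V j m) / (x (m + j + 1) - x m)
    field_simp
    ring

lemma eval_stencilInterpolant (hx : x.Injective) {m k : ℤ} {j : ℕ} (hmk : m ≤ k)
    (hkj : k ≤ m + j) : (stencilInterpolant x V m j).eval (x k) = V k :=
  Lagrange.eval_interpolate_at_node _ hx.injOn (mem_Icc.2 ⟨hmk, hkj⟩)

lemma stencilInterpolant_succ_sub (hx : x.Injective) (a : ℤ) (j : ℕ) :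
    stencilInterpolant x V (a + 1) j - stencilInterpolant x V a j =
      C ((x (a + j + 1) - x a) * dd x V (j + 1) a) * Lagrange.nodal (Icc (a + 1) (a + j)) x := by
  have hne : x (a + j + 1) - x a ≠ 0 := sub_ne_zero.2 (hx.ne (by omega))
  have hlead : (x (a + j + 1) - x a) * dd x V (j + 1) a = dd x V j (a + 1) - dd x V j a := by
    change _ * ((dd x V j (a + 1) - dd x V j a) / (x (a + j + 1) - x a)) = _
    field_simp
  have hcard : #(Icc (a + 1) (a + j)) = j := by simp [Int.card_Icc]
  have hmonic : (Lagrange.nodal (Icc (a + 1) (a + j)) x).coeff j = 1 := by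
    have := (Lagrange.nodal_monic (s := Icc (a + 1) (a + j)) (v := x)).coeff_natDegree
    rwa [Lagrange.natDegree_nodal, hcard] at this
  rw [← sub_eq_zero]
  refine eq_zero_of_degree_lt_of_eval_index_eq_zero (Icc (a + 1) (a + j)) hx.injOn ?_
    fun k hk => ?_
  · rw [hcard, degree_lt_iff_coeff_zero]
    intro n hn
    rcases hn.lt_or_eq with hn | rfl
    · rw [coeff_sub, coeff_sub, coeff_stencilInterpolant_eq_zero V hx _ hn,
        coeff_stencilInterpolant_eq_zero V hx _ hn, coeff_C_mul,
        coeff_eq_zero_of_natDegree_lt (by rwa [Lagrange.natDegree_nodal, hcard])]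
      ring
    · rw [coeff_sub, coeff_sub, coeff_stencilInterpolant V hx, coeff_stencilInterpolant V hx,
        coeff_C_mul, hmonic, hlead]
      ring
  · rw [mem_Icc] at hk
    rw [eval_sub, eval_sub, eval_stencilInterpolant V hx (by omega) (by omega),
      eval_stencilInterpolant V hx (by omega) (by omega), eval_C_mul,
      Lagrange.eval_nodal_at_node (mem_Icc.2 hk)]
    ring

lemma eval_derivative_stencilInterpolant_succ_sub (hx : x.Injective) {a t : ℤ} {j : ℕ}
    (hat : a + 1 ≤ t) (hta : t ≤ a + j) :
    (derivative (stencilInterpolant x V (a + 1) j)).eval (x t) -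
        (derivative (stencilInterpolant x V a j)).eval (x t) =
      (x (a + j + 1) - x a) * dd x V (j + 1) a *
        ∏ k ∈ (Icc (a + 1) (a + j)).erase t, (x t - x k) := by
  rw [← eval_sub, ← derivative_sub, stencilInterpolant_succ_sub V hx, derivative_C_mul, eval_C_mul,
    Lagrange.eval_nodal_derivative_eval_node_eq (mem_Icc.2 ⟨hat, hta⟩), Lagrange.eval_nodal]

end Interpolation

lemma neg_one_zpow_mul_prod_erase_pos {x : ℤ → ℝ} (hx : StrictMono x) {m n t : ℤ} (hmt : m ≤ t)
    (htn : t ≤ n) : 0 < (-1 : ℝ) ^ (n - t) * ∏ k ∈ (Icc m n).erase t, (x t - x k) := by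
  induction n, htn using Int.leInduction with
  | base =>
    rw [sub_self, zpow_zero, one_mul]
    refine prod_pos fun k hk => ?_
    simp only [mem_erase, mem_Icc] at hk
    exact sub_pos.2 (hx (by omega))
  | succ n htn ih =>
    have hinsert : (Icc m (n + 1)).erase t = insert (n + 1) ((Icc m n).erase t) := by
      ext k; simp only [mem_erase, mem_Icc, mem_insert]; omega
    rw [hinsert, prod_insert (by simp), show n + 1 - t = n - t + 1 by ring,
      zpow_add_one₀ (by norm_num)]
    have hstep : 0 < x (n + 1) - x t := sub_pos.2 (hx (by omega))
    calc (0 : ℝ) < (x (n + 1) - x t) * ((-1) ^ (n - t) * ∏ k ∈ (Icc m n).erase t, (x t - x k)) :=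
          mul_pos hstep ih
      _ = _ := by ring

noncomputable def enoStep (d : ℤ → ℝ) (L : ℤ) : ℤ := if |d (L - 1)| < |d L| then L - 1 else L

section EnoStep

variable (d : ℤ → ℝ)

lemma enoStep_le (L : ℤ) : enoStep d L ≤ L := by
  unfold enoStep; split_ifs <;> omega

lemma sub_one_le_enoStep (L : ℤ) : L - 1 ≤ enoStep d L := by
  unfold enoStep; split_ifs <;> omega

lemma enoStep_mono : Monotone (enoStep d) := by
  intro A B hAB
  rcases hAB.lt_or_eq with hAB | rfl
  · linarith [enoStep_le d A, sub_one_le_enoStep d B]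
  · rfl

lemma add_nonneg_of_enoStep {w : ℤ → ℝ} (habs : ∀ a, |w a| = |d a|) {A B : ℤ}
    (hw : ∀ a, A ≤ a → a < B → 0 ≤ w a) {a : ℤ} (hA : enoStep d A ≤ a) (hB : a < enoStep d B) :
    0 ≤ w a + w (a + 1) := by
  have hA' := sub_one_le_enoStep d A
  have hB' := enoStep_le d B
  have hAB : A < B := by
    by_contra hBA
    have := enoStep_mono d (not_lt.1 hBA)
    omega
  by_cases haA : a < A
  · have ha : a = A - 1 := by omega
    have hlt : |d (A - 1)| < |d A| := by
      by_contra hge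
      simp only [enoStep, if_neg hge] at hA
      omega
    have hwA := hw A le_rfl (by omega)
    subst ha
    rw [sub_add_cancel]
    linarith [neg_abs_le (w (A - 1)), habs (A - 1), habs A, abs_of_nonneg hwA]
  by_cases haB : a + 1 < B
  · linarith [hw a (by omega) (by omega), hw (a + 1) (by omega) haB]
  · have ha : a + 1 = B := by omega
    have hge : ¬ |d (B - 1)| < |d B| := by
      intro hlt
      simp only [enoStep, if_pos hlt] at hB
      omega
    have hwa := hw a (by omega) (by omega)
    rw [show a = B - 1 by omega] at hwa ⊢
    rw [sub_add_cancel]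
    linarith [neg_abs_le (w B), habs (B - 1), habs B, abs_of_nonneg hwa]

end EnoStep

noncomputable def enoLeft (x V : ℤ → ℝ) (m : ℤ) (j : ℕ) : ℤ := m + enoOffsetR x V m j

/-- The reconstruction in cell `m` evaluated at `x t`: `v⁻_{i+1/2} = enoValue x V p i (i + 1)` and
`v⁺_{i+1/2} = enoValue x V p (i + 1) (i + 1)`. -/
noncomputable def enoValue (x V : ℤ → ℝ) (p : ℕ) (m t : ℤ) : ℝ :=
  (derivative (stencilInterpolant x V (enoLeft x V m p) p)).eval (x t)

section Eno

variable {x : ℤ → ℝ} (V : ℤ → ℝ)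

lemma enoLeft_one (m : ℤ) : enoLeft x V m 1 = m := by
  simp [enoLeft, enoOffsetR]

lemma enoLeft_succ {j : ℕ} (hj : 1 ≤ j) (m : ℤ) :
    enoLeft x V m (j + 1) = enoStep (dd x V (j + 1)) (enoLeft x V m j) := by
  obtain ⟨j, rfl⟩ := Nat.exists_eq_add_of_le' hj
  rw [show j + 1 + 1 = j + 2 from rfl, enoLeft, enoLeft, enoStep, enoOffsetR]
  split_ifs <;> ring

lemma enoLeft_mem_Icc (m : ℤ) {j : ℕ} (hj : 1 ≤ j) : enoLeft x V m j ∈ Set.Icc (m + 1 - j) m := by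
  induction j, hj using Nat.le_induction with
  | base => simp [enoLeft_one]
  | succ j hj ih =>
    rw [enoLeft_succ V hj]
    have := enoStep_le (dd x V (j + 1)) (enoLeft x V m j)
    have := sub_one_le_enoStep (dd x V (j + 1)) (enoLeft x V m j)
    simp only [Set.mem_Icc] at ih ⊢
    push_cast
    omega

lemma neg_one_zpow_mul_dd_succ (t a : ℤ) (j : ℕ) :
    (-1 : ℝ) ^ (a + ↑(j + 1) - t) * dd x V (j + 2) a =
      ((-1) ^ (a + j - t) * dd x V (j + 1) a + (-1) ^ (a + 1 + j - t) * dd x V (j + 1) (a + 1)) /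
        (x (a + ↑(j + 1) + 1) - x a) := by
  change _ * ((dd x V (j + 1) (a + 1) - dd x V (j + 1) a) / _) = _
  rw [show a + ↑(j + 1) - t = a + j - t + 1 by push_cast; ring,
    show a + 1 + j - t = a + j - t + 1 by ring, zpow_add_one₀ (by norm_num)]
  ring

lemma enoLeft_le_and_sign_dd (hx : StrictMono x) {i : ℤ} (h2 : 0 ≤ dd x V 2 i) {j : ℕ}
    (hj : 1 ≤ j) :
    enoLeft x V i j ≤ enoLeft x V (i + 1) j ∧
      ∀ a, enoLeft x V i j ≤ a → a < enoLeft x V (i + 1) j →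
        0 ≤ (-1 : ℝ) ^ (a + j - (i + 1)) * dd x V (j + 1) a := by
  induction j, hj using Nat.le_induction with
  | base =>
    refine ⟨by simp [enoLeft_one], fun a ha hb => ?_⟩
    rw [enoLeft_one] at ha hb
    obtain rfl : a = i := by omega
    simpa using h2
  | succ j hj ih =>
    obtain ⟨hAB, hsign⟩ := ih
    rw [enoLeft_succ V hj, enoLeft_succ V hj]
    refine ⟨enoStep_mono _ hAB, fun a ha hb => ?_⟩
    rw [neg_one_zpow_mul_dd_succ]
    refine div_nonneg ?_ (sub_nonneg.2 (hx.monotone (by omega)))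
    exact add_nonneg_of_enoStep _ (w := fun a => (-1 : ℝ) ^ (a + j - (i + 1)) * dd x V (j + 1) a)
      (fun a => by simp [abs_mul]) hsign ha hb

lemma enoValue_le_enoValue_succ (hx : StrictMono x) {p : ℕ} (hp : 1 ≤ p) {i : ℤ}
    (h2 : 0 ≤ dd x V 2 i) : enoValue x V p i (i + 1) ≤ enoValue x V p (i + 1) (i + 1) := by
  obtain ⟨hAB, hsign⟩ := enoLeft_le_and_sign_dd V hx h2 hp
  have hA := (enoLeft_mem_Icc (x := x) V i hp).1
  have hB := (enoLeft_mem_Icc (x := x) V (i + 1) hp).2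
  refine monotoneOn_of_le_add_one (f := fun a => (derivative (stencilInterpolant x V a p)).eval
    (x (i + 1))) Set.ordConnected_Icc (fun a _ ha ha1 => ?_) ⟨le_rfl, hAB⟩ ⟨hAB, le_rfl⟩ hAB
  simp only [Set.mem_Icc] at ha ha1
  rw [← sub_nonneg,
    eval_derivative_stencilInterpolant_succ_sub V hx.injective (by omega) (by omega)]
  have hsq : (-1 : ℝ) ^ (a + p - (i + 1)) * (-1) ^ (a + p - (i + 1)) = 1 := by
    rw [← mul_zpow, neg_one_mul, neg_neg, one_zpow]
  calc (0 : ℝ) ≤ (x (a + p + 1) - x a) * ((-1) ^ (a + p - (i + 1)) * dd x V (p + 1) a) *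
        ((-1) ^ (a + p - (i + 1)) * ∏ k ∈ (Icc (a + 1) (a + p)).erase (i + 1), (x (i + 1) - x k)) :=
        mul_nonneg (mul_nonneg (sub_nonneg.2 (hx.monotone (by omega))) (hsign a ha.1 (by omega)))
          (neg_one_zpow_mul_prod_erase_pos hx (by omega) (by omega)).le
    _ = _ := by linear_combination (x (a + p + 1) - x a) * dd x V (p + 1) a *
        (∏ k ∈ (Icc (a + 1) (a + p)).erase (i + 1), (x (i + 1) - x k)) * hsq

lemma dd_neg (j : ℕ) (a : ℤ) : dd x (-V) j a = -dd x V j a := by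
  induction j generalizing a with
  | zero => rfl
  | succ j ih => simp only [dd, ih]; ring

lemma enoOffsetR_neg (m : ℤ) : ∀ j, enoOffsetR x (-V) m j = enoOffsetR x V m j
  | 0 => rfl
  | 1 => rfl
  | j + 2 => by simp only [enoOffsetR, dd_neg, abs_neg, enoOffsetR_neg m (j + 1)]

lemma enoValue_neg (p : ℕ) (m t : ℤ) : enoValue x (-V) p m t = -enoValue x V p m t := by
  simp only [enoValue, enoLeft, enoOffsetR_neg, stencilInterpolant, map_neg, eval_neg]

lemma dd_one_of_primitive (hx : x.Injective) {vbar : ℤ → ℝ}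
    (hV : ∀ j, V (j + 1) - V j = (x (j + 1) - x j) * vbar j) (m : ℤ) : dd x V 1 m = vbar m := by
  change (V (m + 1) - V m) / (x (m + (0 : ℕ) + 1) - x m) = _
  rw [Nat.cast_zero, add_zero, hV, mul_div_cancel_left₀ _ (sub_ne_zero.2 (hx.ne (by omega)))]

end Eno

/-- the sign property of `p`-th order ENO reconstruction.
Interfaces are `x_j` (cell `I_i = [x_i, x_{i+1}]`), `vbar` are the cell averages,
and `V` is (a choice of) the primitive, i.e. `V_{j+1} - V_j = |I_j| vbar_j`.
The reconstructed value in cell `i` at an interface is the derivative of the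
interpolant of `V` on the ENO-selected stencil of `p+1` interface points. -/
theorem eno_reconstruction_sign_property (p : ℕ) (hp : 1 ≤ p) (x vbar V : ℤ → ℝ)
    (hx : StrictMono x)
    (hV : ∀ j, V (j + 1) - V j = (x (j + 1) - x j) * vbar j) (i : ℤ) :
    (vbar (i + 1) - vbar i ≥ 0 →
      (Polynomial.derivative (Lagrange.interpolate
          (Finset.Icc (i + 1 + enoOffsetR x V (i + 1) p)
            (i + 1 + enoOffsetR x V (i + 1) p + p)) x V)).eval (x (i + 1)) -
      (Polynomial.derivative (Lagrange.interpolate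
          (Finset.Icc (i + enoOffsetR x V i p)
            (i + enoOffsetR x V i p + p)) x V)).eval (x (i + 1)) ≥ 0) ∧
    (vbar (i + 1) - vbar i ≤ 0 →
      (Polynomial.derivative (Lagrange.interpolate
          (Finset.Icc (i + 1 + enoOffsetR x V (i + 1) p)
            (i + 1 + enoOffsetR x V (i + 1) p + p)) x V)).eval (x (i + 1)) -
      (Polynomial.derivative (Lagrange.interpolate
          (Finset.Icc (i + enoOffsetR x V i p)
            (i + enoOffsetR x V i p + p)) x V)).eval (x (i + 1)) ≤ 0) ∧
    (vbar (i + 1) = vbar i →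
      (Polynomial.derivative (Lagrange.interpolate
          (Finset.Icc (i + 1 + enoOffsetR x V (i + 1) p)
            (i + 1 + enoOffsetR x V (i + 1) p + p)) x V)).eval (x (i + 1)) =
      (Polynomial.derivative (Lagrange.interpolate
          (Finset.Icc (i + enoOffsetR x V i p)
            (i + enoOffsetR x V i p + p)) x V)).eval (x (i + 1))) := by
  have hden : 0 < x (i + (1 : ℕ) + 1) - x i := sub_pos.2 (hx (by omega))
  have hdd : dd x V 2 i = (vbar (i + 1) - vbar i) / (x (i + (1 : ℕ) + 1) - x i) := by
    change (dd x V 1 (i + 1) - dd x V 1 i) / _ = _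
    rw [dd_one_of_primitive V hx.injective hV, dd_one_of_primitive V hx.injective hV]
  have hup (h : 0 ≤ vbar (i + 1) - vbar i) :
      enoValue x V p i (i + 1) ≤ enoValue x V p (i + 1) (i + 1) :=
    enoValue_le_enoValue_succ V hx hp (hdd ▸ div_nonneg h hden.le)
  have hdown (h : vbar (i + 1) - vbar i ≤ 0) :
      enoValue x V p (i + 1) (i + 1) ≤ enoValue x V p i (i + 1) := by
    have := enoValue_le_enoValue_succ (-V) hx hp (i := i)
      (by rw [dd_neg, hdd]; exact neg_nonneg.2 (div_nonpos_of_nonpos_of_nonneg h hden.le))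
    rwa [enoValue_neg, enoValue_neg, neg_le_neg_iff] at this
  refine ⟨fun h => sub_nonneg.2 (hup h), fun h => sub_nonpos.2 (hdown h), fun h => ?_⟩
  exact le_antisymm (hdown (by rw [h, sub_self])) (hup (by rw [h, sub_self]))
end

section
/- Divided-difference bound for ENO stencils: with the ENO stencil selection as in the sign-property lemma and final offsets r_p ≤ s_p for cells 0 and 1, define constants C_{r,1} = 1 and C_{r,p+1} = (2/(x_{r+p+2} − x_r)) · max(C_{r,p}, C_{r+1,p}). If D := V[x_0, x_1, x_2] ≠ 0, then for r = r_p, ..., s_p, 0 ≤ (−1)^{r+p} V[x_r,...,x_{r+p+1}] / D ≤ C_{r,p}. -/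
/-- The grid-dependent constants `C_{r,p}`: `C_{r,1} = 1` and
`C_{r,p+1} = 2/(x_{r+p+2} - x_r) * max (C_{r,p}) (C_{r+1,p})`. -/
noncomputable def enoC (x : ℤ → ℝ) : ℕ → ℤ → ℝ
  | 0, _ => 1
  | 1, _ => 1
  | p + 2, r => 2 / (x (r + (p : ℤ) + 3) - x r) * max (enoC x (p + 1) r) (enoC x (p + 1) (r + 1))

private lemma eno_core (u v Cu Cv Δ : ℝ) (hΔ : 0 < Δ)
    (h : (0 ≤ u ∧ u ≤ Cu ∧ 0 ≤ v ∧ v ≤ Cv) ∨ (|u| ≤ v ∧ v ≤ Cv) ∨ (|v| ≤ u ∧ u ≤ Cu)) :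
    0 ≤ (u + v) / Δ ∧ (u + v) / Δ ≤ 2 / Δ * max Cu Cv := by
  have hM : 0 ≤ u + v ∧ u + v ≤ 2 * max Cu Cv := by
    rcases h with ⟨h1, h2, h3, h4⟩ | ⟨h1, h2⟩ | ⟨h1, h2⟩
    · have := le_max_left Cu Cv
      have := le_max_right Cu Cv
      constructor <;> linarith
    · have hu1 : -v ≤ u := by have := neg_abs_le u; linarith
      have hu2 : u ≤ v := by have := le_abs_self u; linarith
      have := le_max_right Cu Cv
      constructor <;> linarith
    · have hv1 : -u ≤ v := by have := neg_abs_le v; linarith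
      have hv2 : v ≤ u := by have := le_abs_self v; linarith
      have := le_max_left Cu Cv
      constructor <;> linarith
  refine ⟨div_nonneg hM.1 hΔ.le, ?_⟩
  rw [div_mul_eq_mul_div]
  gcongr
  exact hM.2

private lemma eno_aux_s11 (x V : ℤ → ℝ) (hx : StrictMono x) (hD : dd x V 2 0 ≠ 0) :
    ∀ q : ℕ, ∀ r : ℤ, enoOffsetR x V 0 (q + 1) ≤ r → r ≤ enoOffsetR x V 1 (q + 1) →
      0 ≤ (-1 : ℝ) ^ (r + (q : ℤ) + 2) * dd x V (q + 2) r / dd x V 2 0 ∧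
      (-1 : ℝ) ^ (r + (q : ℤ) + 2) * dd x V (q + 2) r / dd x V 2 0 ≤ enoC x (q + 1) r := by
  have hm1 : (-1 : ℝ) ≠ 0 := by norm_num
  have habs : ∀ (k : ℤ) (y : ℝ), |(-1 : ℝ) ^ k * y / dd x V 2 0| = |y| / |dd x V 2 0| := by
    intro k y
    have h1 : |(-1 : ℝ) ^ k| = 1 := by
      rcases Int.even_or_odd k with he | ho
      · rw [he.neg_one_zpow]; norm_num
      · rw [ho.neg_one_zpow]; norm_num
    rw [abs_div, abs_mul, h1, one_mul]
  intro q
  induction q with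
  | zero =>
    intro r hr1 hr2
    have hr1' : (0 : ℤ) ≤ r := hr1
    have hr2' : r ≤ 0 := hr2
    have hr : r = 0 := le_antisymm hr2' hr1'
    subst hr
    have : ((0 : ℤ) + (0 : ℕ) + 2) = 2 := by norm_num
    rw [this]
    norm_num [div_self hD]
    show (1 : ℝ) ≤ enoC x 1 0
    norm_num [enoC]
  | succ q ih =>
    intro r hr1 hr2
    set a := enoOffsetR x V 0 (q + 1) with ha
    set b := enoOffsetR x V 1 (q + 1) with hb
    have h0 : enoOffsetR x V 0 (q + 2)
        = if |dd x V (q + 2) (0 + a - 1)| < |dd x V (q + 2) (0 + a)| then a - 1 else a := rfl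
    have h1 : enoOffsetR x V 1 (q + 2)
        = if |dd x V (q + 2) (1 + b - 1)| < |dd x V (q + 2) (1 + b)| then b - 1 else b := rfl
    have ea0 : (0 : ℤ) + a - 1 = a - 1 := by ring
    have ea1 : (0 : ℤ) + a = a := by ring
    have eb0 : (1 : ℤ) + b - 1 = b := by ring
    have eb1 : (1 : ℤ) + b = b + 1 := by ring
    rw [ea0, ea1] at h0
    rw [eb0, eb1] at h1
    rw [h0] at hr1
    rw [h1] at hr2
    -- setup
    set D := dd x V 2 0 with hDdef
    have hΔ : 0 < x (r + (q : ℤ) + 3) - x r := sub_pos.2 (hx (by omega))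
    have hdd : dd x V (q + 3) r
        = (dd x V (q + 2) (r + 1) - dd x V (q + 2) r) / (x (r + (q : ℤ) + 3) - x r) := by
      have harg : r + ((q : ℤ) + 2) + 1 = r + (q : ℤ) + 3 := by ring
      show (dd x V (q + 2) (r + 1) - dd x V (q + 2) r) / (x (r + ((q : ℤ) + 2) + 1) - x r) = _
      rw [harg]
    have h3 : (-1 : ℝ) ^ (r + (q : ℤ) + 3) = -(-1 : ℝ) ^ (r + (q : ℤ) + 2) := by
      rw [show r + (q : ℤ) + 3 = (r + (q : ℤ) + 2) + 1 by ring, zpow_add_one₀ hm1]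
      ring
    set u := (-1 : ℝ) ^ (r + (q : ℤ) + 2) * dd x V (q + 2) r / D with hu
    set v := (-1 : ℝ) ^ (r + (q : ℤ) + 3) * dd x V (q + 2) (r + 1) / D with hv
    have hG : (-1 : ℝ) ^ (r + ((q : ℕ) + 1 : ℕ) + 2) * dd x V (q + 1 + 2) r / D
        = (u + v) / (x (r + (q : ℤ) + 3) - x r) := by
      have hcast : (r + ((q : ℕ) + 1 : ℕ) + 2 : ℤ) = r + (q : ℤ) + 3 := by push_cast; ring
      have : dd x V (q + 1 + 2) r = dd x V (q + 3) r := by norm_num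
      rw [hcast, this, hdd, hu, hv, h3]
      field_simp
      ring
    have hC : enoC x (q + 1 + 1) r
        = 2 / (x (r + (q : ℤ) + 3) - x r) * max (enoC x (q + 1) r) (enoC x (q + 1) (r + 1)) := rfl
    -- the IH in convenient form
    have ihu : a ≤ r → r ≤ b → 0 ≤ u ∧ u ≤ enoC x (q + 1) r := fun h1 h2 => ih r h1 h2
    have ihv : a ≤ r + 1 → r + 1 ≤ b →
        0 ≤ v ∧ v ≤ enoC x (q + 1) (r + 1) := by
      intro h1 h2
      have := ih (r + 1) h1 h2
      have hcast : (r + 1 + (q : ℤ) + 2) = r + (q : ℤ) + 3 := by ring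
      rwa [hcast] at this
    rw [hG, hC]
    apply eno_core _ _ _ _ _ hΔ
    rcases lt_or_ge r a with hra | hra
    · -- r = a - 1, cond0 holds
      have hc0 : |dd x V (q + 2) (a - 1)| < |dd x V (q + 2) a| := by
        by_contra hc
        rw [if_neg hc] at hr1
        omega
      rw [if_pos hc0] at hr1
      have hreq : r = a - 1 := le_antisymm (by omega) hr1
      have hab : a ≤ b := by
        rcases lt_or_ge b a with hba | hba
        · exfalso
          by_cases hc1 : |dd x V (q + 2) b| < |dd x V (q + 2) (b + 1)|
          · rw [if_pos hc1] at hr2; omega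
          · rw [if_neg hc1] at hr2
            have e2 : a = b + 1 := by omega
            rw [e2] at hc0
            simp only [add_sub_cancel_right] at hc0
            exact hc1 hc0
        · exact hba
      have hv' := ihv (by omega) (by omega)
      refine Or.inr (Or.inl ⟨?_, hv'.2⟩)
      have h1 : |u| = |dd x V (q + 2) r| / |D| := habs _ _
      have h2 : |v| = |dd x V (q + 2) (r + 1)| / |D| := habs _ _
      have hlt : |dd x V (q + 2) r| < |dd x V (q + 2) (r + 1)| := by
        rw [hreq]; simpa using hc0
      have : |u| ≤ |v| := by
        rw [h1, h2]
        gcongr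
      calc |u| ≤ |v| := this
        _ = v := abs_of_nonneg hv'.1
    · rcases lt_or_ge r b with hrb | hrb
      · -- interior case
        exact Or.inl ⟨(ihu hra (by omega)).1, (ihu hra (by omega)).2,
          (ihv (by omega) (by omega)).1, (ihv (by omega) (by omega)).2⟩
      · -- r = b, ¬cond1
        have hrb' : r = b := by
          by_cases hc1 : |dd x V (q + 2) b| < |dd x V (q + 2) (b + 1)|
          · rw [if_pos hc1] at hr2; omega
          · rw [if_neg hc1] at hr2; omega
        have hc1 : ¬ |dd x V (q + 2) b| < |dd x V (q + 2) (b + 1)| := by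
          intro hc
          rw [if_pos hc] at hr2; omega
        have hu' := ihu hra (by omega)
        refine Or.inr (Or.inr ⟨?_, hu'.2⟩)
        have h1 : |u| = |dd x V (q + 2) r| / |D| := habs _ _
        have h2 : |v| = |dd x V (q + 2) (r + 1)| / |D| := habs _ _
        have hle : |dd x V (q + 2) (r + 1)| ≤ |dd x V (q + 2) r| := by
          rw [hrb']; exact not_lt.1 hc1
        have : |v| ≤ |u| := by
          rw [h1, h2]
          gcongr
        calc |v| ≤ |u| := this
          _ = u := abs_of_nonneg hu'.1

/-- divided-difference bound for ENO stencils: the normalized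
divided differences are bounded between `0` and the grid-dependent constants
`C_{r,p}`. -/
theorem eno_divided_difference_bound (p : ℕ) (hp : 1 ≤ p) (x V : ℤ → ℝ)
    (hx : StrictMono x) (hD : dd x V 2 0 ≠ 0) (r : ℤ)
    (hr1 : enoOffsetR x V 0 p ≤ r) (hr2 : r ≤ enoOffsetR x V 1 p) :
    0 ≤ (-1 : ℝ) ^ (r + (p : ℤ) + 1) * dd x V (p + 1) r / dd x V 2 0 ∧
    (-1 : ℝ) ^ (r + (p : ℤ) + 1) * dd x V (p + 1) r / dd x V 2 0 ≤ enoC x p r := by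
  obtain ⟨q, rfl⟩ : ∃ q, p = q + 1 := ⟨p - 1, by omega⟩
  have hcast : (r + ((q : ℕ) + 1 : ℕ) + 1 : ℤ) = r + (q : ℤ) + 2 := by push_cast; ring
  have := eno_aux_s11 x V hx hD q r hr1 hr2
  rw [hcast]
  exact this
end

section
/- Uniform-mesh jump bound for ENO reconstruction: on a uniform mesh of width h, the jump in p-th order ENO reconstructed interface values satisfies (v⁺_{1/2} − v⁻_{1/2})/(v̄_1 − v̄_0) ≤ C_p where C_p = 2^{p−1} (1/p!) Σ_{k=0}^{p−1} k!(p−k−1)!, whenever v̄_1 ≠ v̄_0. -/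
open Polynomial Lagrange Finset

theorem sum_Ico_sub_int {M : Type*} [AddCommGroup M] (f : ℤ → M) {a b : ℤ} (hab : a ≤ b) :
    ∑ t ∈ Ico a b, (f (t + 1) - f t) = f b - f a := by
  induction b, hab using Int.leInduction with
  | base => simp
  | succ b hab ih =>
    rw [← insert_Ico_right_eq_Ico_add_one hab, sum_insert (by simp), ih]
    abel

theorem factorial_mul_factorial_add_factorial_mul_factorial {p k : ℕ} (hk : k < p) :
    (k + 1).factorial * (p - (k + 1)).factorial + k.factorial * (p - k).factorial =
      (p + 1) * (k.factorial * (p - k - 1).factorial) := by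
  obtain ⟨m, rfl⟩ := Nat.exists_eq_add_of_lt hk
  rw [show k + m + 1 - k - 1 = m by omega, show k + m + 1 - k = m + 1 by omega,
    show k + m + 1 - (k + 1) = m by omega, Nat.factorial_succ k, Nat.factorial_succ m]
  ring

theorem Lagrange.interpolate_insert {F ι : Type*} [Field F] [DecidableEq ι] {s : Finset ι}
    {v r : ι → F} {i : ι} (hi : i ∉ s) (hvs : Set.InjOn v (insert i s : Finset ι)) {d : F}
    (hd : eval (v i) (interpolate s v r) + d * eval (v i) (nodal s v) = r i) :
    interpolate (insert i s) v r = interpolate s v r + C d * nodal s v := by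
  have hvs' : Set.InjOn v s := hvs.mono (by simp)
  refine (eq_interpolate_of_eval_eq _ hvs ?_ fun j hj => ?_).symm
  · rw [card_insert_of_notMem hi]
    refine (degree_add_le _ _).trans_lt (max_lt ?_ ?_)
    · exact (degree_interpolate_lt _ hvs').trans (by exact_mod_cast Nat.lt_succ_self _)
    · refine (degree_mul_le _ _).trans_lt ?_
      refine (add_le_add degree_C_le degree_nodal.le).trans_lt ?_
      rw [zero_add]
      exact_mod_cast Nat.lt_succ_self _
  · rcases mem_insert.1 hj with rfl | hj
    · simpa using hd
    · rw [eval_add, eval_interpolate_at_node _ hvs' hj, eval_mul, eval_nodal_at_node hj, mul_zero,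
        add_zero]

section Newton

variable {x V : ℤ → ℝ}

theorem interpolate_Icc_eq_add_dd (hx : Function.Injective x) (n : ℕ) (a : ℤ) :
    interpolate (Icc a (a + n)) x V =
        interpolate (Icc a (a + n - 1)) x V + C (dd x V n a) * nodal (Icc a (a + n - 1)) x ∧
    interpolate (Icc a (a + n)) x V =
        interpolate (Icc (a + 1) (a + n)) x V + C (dd x V n a) * nodal (Icc (a + 1) (a + n)) x := by
  induction n generalizing a with
  | zero =>
    -- the shorter stencils are empty: `interpolate ∅ = 0` and `nodal ∅ = 1`
    simp [dd, Icc_eq_empty_of_lt]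
  | succ n ih =>
    have hb : a + ↑(n + 1) = a + n + 1 := by push_cast; ring
    rw [hb, add_sub_cancel_right]
    have hne : x (a + n + 1) - x a ≠ 0 := sub_ne_zero.2 (hx.ne (by omega))
    have hdd : dd x V (n + 1) a * (x (a + n + 1) - x a) = dd x V n (a + 1) - dd x V n a :=
      div_mul_cancel₀ _ hne
    obtain ⟨-, hL⟩ := ih a
    obtain ⟨hR, -⟩ := ih (a + 1)
    rw [show a + 1 + n = a + n + 1 by ring, add_sub_cancel_right] at hR
    have hN : nodal (Icc a (a + n)) x = (X - C (x a)) * nodal (Icc (a + 1) (a + n)) x := by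
      rw [← insert_Icc_add_one_left_eq_Icc (by omega), nodal_insert_eq_nodal (by simp)]
    have hN' : nodal (Icc (a + 1) (a + n + 1)) x =
        (X - C (x (a + n + 1))) * nodal (Icc (a + 1) (a + n)) x := by
      rw [← insert_Icc_sub_one_right_eq_Icc (show a + 1 ≤ a + n + 1 by omega),
        nodal_insert_eq_nodal (by simp), add_sub_cancel_right]
    constructor
    · rw [← insert_Icc_sub_one_right_eq_Icc (show a ≤ a + n + 1 by omega),
        add_sub_cancel_right]
      refine interpolate_insert (by simp) hx.injOn ?_
      have e1 := congrArg (eval (x (a + n + 1))) hL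
      have e2 := congrArg (eval (x (a + n + 1))) hR
      rw [eval_interpolate_at_node _ hx.injOn (by simp)] at e2
      simp only [eval_add, eval_mul, eval_C] at e1 e2
      rw [hN]
      simp only [eval_mul, eval_sub, eval_X, eval_C]
      linear_combination e1 - e2 + eval (x (a + n + 1)) (nodal (Icc (a + 1) (a + n)) x) * hdd
    · rw [← insert_Icc_add_one_left_eq_Icc (show a ≤ a + n + 1 by omega)]
      refine interpolate_insert (by simp) hx.injOn ?_
      have e1 := congrArg (eval (x a)) hR
      have e2 := congrArg (eval (x a)) hL
      rw [eval_interpolate_at_node _ hx.injOn (by simp)] at e2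
      simp only [eval_add, eval_mul, eval_C] at e1 e2
      rw [hN']
      simp only [eval_mul, eval_sub, eval_X, eval_C]
      linear_combination e1 - e2 - eval (x a) (nodal (Icc (a + 1) (a + n)) x) * hdd

theorem interpolate_Icc_add_one_sub (hx : Function.Injective x) (n : ℕ) (a : ℤ) :
    interpolate (Icc (a + 1) (a + 1 + n)) x V - interpolate (Icc a (a + n)) x V =
      C (dd x V (n + 1) a) * (nodal (Icc a (a + n)) x - nodal (Icc (a + 1) (a + 1 + n)) x) := by
  obtain ⟨hR, hL⟩ := interpolate_Icc_eq_add_dd (V := V) hx (n + 1) a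
  have hb : a + ↑(n + 1) = a + 1 + n := by push_cast; ring
  rw [hb] at hR hL
  rw [show a + 1 + n - 1 = a + n by ring] at hR
  linear_combination hR - hL

theorem eval_derivative_interpolate_Icc_add_one_sub (hx : Function.Injective x) (n : ℕ) (a : ℤ)
    (t : ℝ) :
    eval t (derivative (interpolate (Icc (a + 1) (a + 1 + n)) x V)) -
        eval t (derivative (interpolate (Icc a (a + n)) x V)) =
      dd x V (n + 1) a * (eval t (derivative (nodal (Icc a (a + n)) x)) -
        eval t (derivative (nodal (Icc (a + 1) (a + 1 + n)) x))) := by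
  have := congrArg (fun P => eval t (derivative P)) (interpolate_Icc_add_one_sub (V := V) hx n a)
  simpa only [derivative_sub, derivative_mul, derivative_C, zero_mul, zero_add, eval_sub,
    eval_mul, eval_C] using this

end Newton

section UniformMesh

variable {h : ℝ} {x : ℤ → ℝ}

theorem uniform_mesh_sub (hx : ∀ j, x (j + 1) = x j + h) (a b : ℤ) :
    x b - x a = (b - a) * h := by
  have hx0 : ∀ j : ℤ, x j = x 0 + j * h := by
    intro j
    induction j using Int.induction_on with
    | zero => simp
    | succ k ih => rw [hx, ih]; push_cast; ring
    | pred k ih =>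
      have := hx (-k - 1)
      rw [sub_add_cancel] at this
      push_cast at ih ⊢
      linarith
  rw [hx0 a, hx0 b]
  ring

theorem uniform_mesh_injective (hx : ∀ j, x (j + 1) = x j + h) (hh : h ≠ 0) :
    Function.Injective x := fun a b hab => by
  have := uniform_mesh_sub hx b a
  rw [hab, sub_self, eq_comm, mul_eq_zero, sub_eq_zero] at this
  exact_mod_cast this.resolve_right hh

theorem dd_succ_of_uniform {V : ℤ → ℝ} (hx : ∀ j, x (j + 1) = x j + h) (n : ℕ) (a : ℤ) :
    dd x V (n + 1) a = (dd x V n (a + 1) - dd x V n a) / ((n + 1) * h) := by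
  rw [dd.eq_2, uniform_mesh_sub hx]
  push_cast
  ring_nf

theorem dd_one_of_uniform {V vbar : ℤ → ℝ} (hx : ∀ j, x (j + 1) = x j + h) (hh : h ≠ 0)
    (hV : ∀ j, V (j + 1) - V j = h * vbar j) (a : ℤ) : dd x V 1 a = vbar a := by
  rw [dd_succ_of_uniform hx]
  simp only [dd, hV, CharP.cast_eq_zero, zero_add, one_mul]
  field_simp

theorem prod_Icc_sub_left_of_uniform (hx : ∀ j, x (j + 1) = x j + h) (c : ℤ) (n : ℕ) :
    ∏ j ∈ Icc (c - n) (c - 1), (x c - x j) = h ^ n * n.factorial := by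
  induction n with
  | zero => simp
  | succ n ih =>
    rw [← insert_Icc_add_one_left_eq_Icc (by omega), prod_insert (by simp),
      show c - ↑(n + 1) + 1 = c - n by push_cast; ring, ih, uniform_mesh_sub hx,
      Nat.factorial_succ]
    push_cast
    ring

theorem prod_Icc_sub_right_of_uniform (hx : ∀ j, x (j + 1) = x j + h) (c : ℤ) (m : ℕ) :
    ∏ j ∈ Icc (c + 1) (c + m), (x c - x j) = (-h) ^ m * m.factorial := by
  induction m with
  | zero => simp
  | succ m ih =>
    rw [← insert_Icc_sub_one_right_eq_Icc (by omega), prod_insert (by simp),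
      show c + ↑(m + 1) - 1 = c + m by push_cast; ring, ih, uniform_mesh_sub hx,
      Nat.factorial_succ]
    push_cast
    ring

theorem abs_eval_derivative_nodal_of_uniform (hx : ∀ j, x (j + 1) = x j + h) (c : ℤ)
    {n p : ℕ} (hnp : n ≤ p) :
    |eval (x c) (derivative (nodal (Icc (c - n) (c - n + p)) x))| =
      |h| ^ p * n.factorial * (p - n).factorial := by
  have hsplit : (Icc (c - n) (c - n + p)).erase c =
      Icc (c - n) (c - 1) ∪ Icc (c + 1) (c + ↑(p - n)) := by
    ext j; simp only [mem_erase, mem_Icc, mem_union]; omega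
  rw [eval_nodal_derivative_eval_node_eq (by simp; omega), hsplit, eval_nodal,
    prod_union (disjoint_left.2 fun j hj hj' => by simp only [mem_Icc] at hj hj'; omega),
    prod_Icc_sub_left_of_uniform hx, prod_Icc_sub_right_of_uniform hx]
  obtain ⟨m, rfl⟩ := Nat.exists_eq_add_of_le hnp
  simp only [abs_mul, abs_pow, abs_neg, Nat.abs_cast, Nat.add_sub_cancel_left]
  ring

theorem sum_Ico_abs_eval_derivative_nodal_of_uniform (hx : ∀ j, x (j + 1) = x j + h)
    (c : ℤ) (p : ℕ) :
    ∑ t ∈ Ico (c - p) c, (|eval (x c) (derivative (nodal (Icc t (t + p)) x))| +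
        |eval (x c) (derivative (nodal (Icc (t + 1) (t + 1 + p)) x))|) =
      |h| ^ p * ((p + 1) * ∑ k ∈ range p, (k.factorial * (p - k - 1).factorial : ℝ)) := by
  rw [mul_sum, mul_sum]
  symm
  refine sum_nbij' (fun k : ℕ => c - 1 - k) (fun t => (c - 1 - t).toNat) (fun k hk => ?_)
    (fun t ht => ?_) (fun k _ => by simp) (fun t ht => ?_) (fun k hk => ?_)
  · simp only [mem_range, mem_Ico] at hk ⊢; omega
  · simp only [mem_range, mem_Ico] at ht ⊢; omega
  · simp only [mem_Ico] at ht; omega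
  · rw [mem_range] at hk
    rw [show c - 1 - (k : ℤ) = c - ↑(k + 1) by push_cast; ring,
      show c - ↑(k + 1) + 1 = c - k by push_cast; ring,
      abs_eval_derivative_nodal_of_uniform hx c hk,
      abs_eval_derivative_nodal_of_uniform hx c hk.le]
    have := factorial_mul_factorial_add_factorial_mul_factorial hk
    rw [mul_assoc, mul_assoc, ← mul_add]
    exact_mod_cast (congrArg (fun n : ℕ => |h| ^ p * (n : ℝ)) this).symm

end UniformMesh

/-- One ENO step on the absolute start `s` of a stencil, `f t` being the top divided difference
of the extended stencil starting at `t`. -/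
noncomputable def enoSelect (f : ℤ → ℝ) (s : ℤ) : ℤ :=
  if |f (s - 1)| < |f s| then s - 1 else s

section EnoSelect

variable {f : ℤ → ℝ} {s : ℤ}

theorem enoSelect_eq_or : enoSelect f s = s - 1 ∨ enoSelect f s = s := by
  unfold enoSelect; split_ifs <;> simp

theorem abs_enoSelect_le_sub_one : |f (enoSelect f s)| ≤ |f (s - 1)| := by
  unfold enoSelect; split_ifs with hs
  · exact le_rfl
  · exact not_lt.1 hs

theorem abs_enoSelect_le : |f (enoSelect f s)| ≤ |f s| := by
  unfold enoSelect; split_ifs with hs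
  · exact hs.le
  · exact le_rfl

/-- The new gap exceeds the old one by at most one start at each end, and `enoSelect` only
reaches such a start where `|f|` is bounded by its value at a start of the old gap. -/
theorem abs_le_of_between_enoSelect {B : ℝ} {a b : ℤ}
    (hf : ∀ m, min a b ≤ m → m < max a b → |f m| ≤ B) {m : ℤ}
    (hm : min (enoSelect f a) (enoSelect f b) ≤ m)
    (hm' : m < max (enoSelect f a) (enoSelect f b)) :
    |f m| ≤ B ∧ |f (m + 1)| ≤ B := by
  wlog hab : a ≤ b generalizing a b
  · rw [min_comm] at hf hm
    rw [max_comm] at hf hm'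
    exact this hf hm hm' (by omega)
  rw [min_eq_left hab, max_eq_right hab] at hf
  have key : ∀ m, min (enoSelect f a) (enoSelect f b) ≤ m →
      m ≤ max (enoSelect f a) (enoSelect f b) → |f m| ≤ B := by
    intro m hm₁ hm₂
    have ha := enoSelect_eq_or (f := f) (s := a)
    have hb := enoSelect_eq_or (f := f) (s := b)
    have hab' : a < b := lt_of_le_of_ne hab fun hab => by subst hab; omega
    rcases lt_or_ge m a with hma | hma
    · obtain rfl : m = a - 1 := by omega
      have : enoSelect f a = a - 1 := by omega
      exact this ▸ abs_enoSelect_le.trans (hf a le_rfl hab')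
    rcases lt_or_ge m b with hmb | hmb
    · exact hf m hma hmb
    · obtain rfl : m = b := by omega
      have : enoSelect f m = m := by omega
      exact this ▸ abs_enoSelect_le_sub_one.trans (hf (m - 1) (by omega) (by omega))
  exact ⟨key m hm hm'.le, key (m + 1) (by omega) (by omega)⟩

end EnoSelect

theorem add_enoOffsetR_add_two (x V : ℤ → ℝ) (i : ℤ) (k : ℕ) :
    i + enoOffsetR x V i (k + 2) =
      enoSelect (dd x V (k + 2)) (i + enoOffsetR x V i (k + 1)) := by
  simp only [enoOffsetR, enoSelect, add_sub_assoc]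
  split_ifs <;> rfl

theorem enoOffsetR_mem_Icc (x V : ℤ → ℝ) (i : ℤ) {k : ℕ} (hk : 1 ≤ k) :
    enoOffsetR x V i k ∈ Set.Icc (1 - k : ℤ) 0 := by
  induction k, hk using Nat.le_induction with
  | base => simp [enoOffsetR]
  | succ k hk ih =>
    obtain ⟨k, rfl⟩ := Nat.exists_eq_add_of_le' hk
    show enoOffsetR x V i (k + 2) ∈ _
    have := add_enoOffsetR_add_two x V i k
    rcases enoSelect_eq_or (f := dd x V (k + 2)) (s := i + enoOffsetR x V i (k + 1)) with
      hsel | hsel <;>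
    · simp only [Set.mem_Icc] at ih ⊢; push_cast at ih ⊢; omega

theorem abs_dd_le_of_between_eno {h : ℝ} {x vbar V : ℤ → ℝ}
    (hx : ∀ j, x (j + 1) = x j + h) (hh : h ≠ 0) (hV : ∀ j, V (j + 1) - V j = h * vbar j)
    (i : ℤ) {k : ℕ} (hk : 1 ≤ k) (j : ℤ)
    (hj : min (i + enoOffsetR x V i k) (i + 1 + enoOffsetR x V (i + 1) k) ≤ j)
    (hj' : j < max (i + enoOffsetR x V i k) (i + 1 + enoOffsetR x V (i + 1) k)) :
    |dd x V (k + 1) j| ≤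
      2 ^ (k - 1) * |vbar (i + 1) - vbar i| / ((k + 1).factorial * |h| ^ k) := by
  induction k, hk using Nat.le_induction generalizing j with
  | base =>
    simp only [enoOffsetR, add_zero] at hj hj'
    obtain rfl : j = i := by omega
    rw [dd_succ_of_uniform hx, dd_one_of_uniform hx hh hV, dd_one_of_uniform hx hh hV, abs_div,
      abs_mul]
    norm_num
  | succ k hk ih =>
    obtain ⟨k, rfl⟩ := Nat.exists_eq_add_of_le' hk
    rw [add_enoOffsetR_add_two, add_enoOffsetR_add_two] at hj hj'
    obtain ⟨hj1, hj0⟩ := abs_le_of_between_enoSelect ih hj hj'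
    rw [Nat.add_sub_cancel] at hj1 hj0
    rw [dd_succ_of_uniform hx, abs_div, abs_mul, abs_of_pos (by positivity : (0 : ℝ) < _ + 1),
      div_le_iff₀ (by positivity)]
    calc |dd x V (k + 2) (j + 1) - dd x V (k + 2) j|
        ≤ 2 * (2 ^ k * |vbar (i + 1) - vbar i| / ((k + 2).factorial * |h| ^ (k + 1))) := by
          linarith [abs_sub (dd x V (k + 2) (j + 1)) (dd x V (k + 2) j)]
      _ = _ := by
          rw [Nat.factorial_succ (k + 2)]
          push_cast
          field_simp
          ring

theorem abs_eval_derivative_interpolate_sub_le {h : ℝ} {x V : ℤ → ℝ}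
    (hx : ∀ j, x (j + 1) = x j + h) (hh : h ≠ 0) {p : ℕ} {a b c : ℤ} {B : ℝ}
    (hB : 0 ≤ B) (hmin : c - p ≤ min a b) (hmax : max a b ≤ c)
    (hdd : ∀ t, min a b ≤ t → t < max a b → |dd x V (p + 1) t| ≤ B) :
    |eval (x c) (derivative (interpolate (Icc b (b + p)) x V)) -
        eval (x c) (derivative (interpolate (Icc a (a + p)) x V))| ≤
      B * (|h| ^ p *
        ((p + 1) * ∑ k ∈ range p, (k.factorial * (p - k - 1).factorial : ℝ))) := by
  wlog hab : a ≤ b generalizing a b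
  · rw [abs_sub_comm]
    rw [min_comm] at hmin hdd
    rw [max_comm] at hmax hdd
    exact this hmin hmax hdd (by omega)
  rw [min_eq_left hab] at hmin hdd
  rw [max_eq_right hab] at hmax hdd
  let g (t : ℤ) := eval (x c) (derivative (interpolate (Icc t (t + p)) x V))
  let N (t : ℤ) := eval (x c) (derivative (nodal (Icc t (t + p)) x))
  have hstep (t : ℤ) : g (t + 1) - g t = dd x V (p + 1) t * (N t - N (t + 1)) :=
    eval_derivative_interpolate_Icc_add_one_sub (uniform_mesh_injective hx hh) p t (x c)
  calc |g b - g a| = |∑ t ∈ Ico a b, (g (t + 1) - g t)| := by rw [sum_Ico_sub_int g hab]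
    _ ≤ ∑ t ∈ Ico a b, B * (|N t| + |N (t + 1)|) := by
        refine (abs_sum_le_sum_abs _ _).trans (sum_le_sum fun t ht => ?_)
        rw [mem_Ico] at ht
        rw [hstep, abs_mul]
        exact mul_le_mul (hdd t ht.1 ht.2) (abs_sub _ _) (abs_nonneg _) hB
    _ ≤ ∑ t ∈ Ico (c - p) c, B * (|N t| + |N (t + 1)|) :=
        sum_le_sum_of_subset_of_nonneg (Ico_subset_Ico hmin hmax) fun _ _ _ => by positivity
    _ = _ := by rw [← mul_sum, sum_Ico_abs_eval_derivative_nodal_of_uniform hx]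

/-- uniform-mesh bound on the relative interface jump of `p`-th order
ENO reconstruction.  Cell 0 is `[x_0, x_1]` and cell 1 is `[x_1, x_2]`; the jump of
the reconstructed values at the interface `x_1`, divided by the jump of the cell
averages, is at most `2^(p-1) (1/p!) ∑_{k=0}^{p-1} k! (p-k-1)!`. -/
theorem eno_reconstruction_uniform_jump_bound (p : ℕ) (hp : 1 ≤ p) (h : ℝ)
    (hh : 0 < h) (x vbar V : ℤ → ℝ)
    (hx : ∀ j, x (j + 1) = x j + h)
    (hV : ∀ j, V (j + 1) - V j = h * vbar j)
    (hne : vbar 1 ≠ vbar 0) :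
    ((Polynomial.derivative (Lagrange.interpolate
        (Finset.Icc (1 + enoOffsetR x V 1 p) (1 + enoOffsetR x V 1 p + p)) x V)).eval (x 1) -
     (Polynomial.derivative (Lagrange.interpolate
        (Finset.Icc (enoOffsetR x V 0 p) (enoOffsetR x V 0 p + p)) x V)).eval (x 1)) /
      (vbar 1 - vbar 0) ≤
      2 ^ (p - 1) * (1 / (p.factorial : ℝ)) *
        ∑ k ∈ Finset.range p, ((k.factorial : ℝ) * ((p - k - 1).factorial : ℝ)) := by
  have hΔ : 0 < |vbar 1 - vbar 0| := abs_pos.2 (sub_ne_zero.2 hne)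
  have hdd := abs_dd_le_of_between_eno hx hh.ne' hV 0 hp
  simp only [zero_add] at hdd
  have hr0 := enoOffsetR_mem_Icc x V 0 hp
  have hr1 := enoOffsetR_mem_Icc x V 1 hp
  simp only [Set.mem_Icc] at hr0 hr1
  have hjump := abs_eval_derivative_interpolate_sub_le hx hh.ne' (c := 1) (by positivity)
    (by omega) (by omega) hdd
  calc _ ≤ |_| := le_abs_self _
    _ = _ := abs_div _ _
    _ ≤ _ := div_le_div_of_nonneg_right hjump hΔ.le
    _ = _ := by
      rw [Nat.factorial_succ, abs_of_pos hh]
      push_cast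
      field_simp
end
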